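/- Let Π be a finite set of policies with known action-value functions Q^π for a reward r. Define the GPI policy by π^GPI(s) ∈ argmax_{a} max_{π∈Π} Q^π(s,a). Then for every state-action pair (s,a) and every π ∈ Π, the action-value function of π^GPI satisfies Q^{π^GPI}(s,a) ≥ Q^π(s,a). -/

import Mathlib

/-!
Let `Q* = max_{π ∈ Π} Q^π` and let `M` be the largest value of `Q* - Q^{π^GPI}`. One Bellman
backup shows `Q^π ≤ Q^{π^GPI} + γ M` for every `π ∈ Π`, because `π^GPI` is greedy for `Q*`;
taking the maximum over `π` and then over `(s, a)` gives `M ≤ γ M`, so `M ≤ 0` as `γ < 1`.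
-/

open Finset

def bellmanBackup {S A : Type*} [Fintype S] (P : S → A → S → ℝ) (r : S → A → S → ℝ) (γ : ℝ)
    (V : S → ℝ) (s : S) (a : A) : ℝ :=
  ∑ s', P s a s' * (r s a s' + γ * V s')

theorem bellmanBackup_le_add {S A : Type*} [Fintype S] {P : S → A → S → ℝ}
    (hP0 : ∀ s a s', 0 ≤ P s a s') (hP1 : ∀ s a, ∑ s', P s a s' = 1) (r : S → A → S → ℝ)
    {γ : ℝ} (hγ0 : 0 ≤ γ) {V W : S → ℝ} {c : ℝ} (hVW : ∀ s', V s' ≤ W s' + c) (s : S) (a : A) :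
    bellmanBackup P r γ V s a ≤ bellmanBackup P r γ W s a + γ * c := by
  calc bellmanBackup P r γ V s a
      ≤ ∑ s', P s a s' * (r s a s' + γ * (W s' + c)) := by
        refine sum_le_sum fun s' _ => mul_le_mul_of_nonneg_left ?_ (hP0 s a s')
        gcongr
        exact hVW s'
    _ = bellmanBackup P r γ W s a + (∑ s', P s a s') * (γ * c) := by
        rw [bellmanBackup, sum_mul, ← sum_add_distrib]
        exact sum_congr rfl fun s' _ => by ring
    _ = bellmanBackup P r γ W s a + γ * c := by rw [hP1, one_mul]

theorem nonpos_of_le_mul_upperBound {ι : Type*} [Finite ι] {d : ι → ℝ} {γ : ℝ} (hγ1 : γ < 1)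
    (h : ∀ M, (∀ j, d j ≤ M) → ∀ i, d i ≤ γ * M) (i : ι) : d i ≤ 0 := by
  have : Nonempty ι := ⟨i⟩
  obtain ⟨i₀, hi₀⟩ := Finite.exists_max d
  have hmax : d i₀ ≤ γ * d i₀ := h (d i₀) hi₀ i₀
  have : d i₀ ≤ 0 := by nlinarith
  exact (hi₀ i).trans this

section GPI

variable {S A : Type*} {P : S → A → S → ℝ} {r : S → A → S → ℝ} {γ : ℝ}
  {Q : (S → A) → S → A → ℝ} {Pi : Finset (S → A)} {hne : Pi.Nonempty} {πGPI : S → A}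

theorem le_sup'_apply_gpi
    (hGPI : ∀ s a, Pi.sup' hne (fun π => Q π s a) ≤ Pi.sup' hne (fun π => Q π s (πGPI s)))
    {π : S → A} (hπ : π ∈ Pi) (s : S) :
    Q π s (π s) ≤ Pi.sup' hne (fun π => Q π s (πGPI s)) :=
  (le_sup' (fun π' => Q π' s (π s)) hπ).trans (hGPI s (π s))

theorem sup'_le_add_mul_of_sup'_le_add [Fintype S]
    (hP0 : ∀ s a s', 0 ≤ P s a s') (hP1 : ∀ s a, ∑ s', P s a s' = 1) (hγ0 : 0 ≤ γ)
    (hQ : ∀ (π : S → A) s a, Q π s a = bellmanBackup P r γ (fun s' => Q π s' (π s')) s a)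
    (hGPI : ∀ s a, Pi.sup' hne (fun π => Q π s a) ≤ Pi.sup' hne (fun π => Q π s (πGPI s)))
    {M : ℝ} (hM : ∀ s a, Pi.sup' hne (fun π => Q π s a) ≤ Q πGPI s a + M) (s : S) (a : A) :
    Pi.sup' hne (fun π => Q π s a) ≤ Q πGPI s a + γ * M := by
  refine sup'_le _ _ fun π hπ => ?_
  have hnext : ∀ s', Q π s' (π s') ≤ Q πGPI s' (πGPI s') + M := fun s' =>
    (le_sup'_apply_gpi hGPI hπ s').trans (hM s' (πGPI s'))
  rw [hQ π, hQ πGPI]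
  exact bellmanBackup_le_add hP0 hP1 r hγ0 hnext s a

end GPI

/-- Generalized policy improvement (GPI) guarantee. In a finite MDP,
given a finite nonempty set `Π` of deterministic policies whose action-value functions
`Q π` satisfy their respective Bellman equations, the GPI policy defined by
`π^GPI(s) ∈ argmax_a max_{π ∈ Π} Q π (s,a)` satisfies
`Q π^GPI (s,a) ≥ Q π (s,a)` for every `(s,a)` and every `π ∈ Π`. -/
theorem gpi_improvement {S A : Type*} [Fintype S] [Fintype A]
    (P : S → A → S → ℝ) (hP0 : ∀ s a s', 0 ≤ P s a s')
    (hP1 : ∀ s a, ∑ s', P s a s' = 1)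
    (r : S → A → S → ℝ) (γ : ℝ) (hγ0 : 0 ≤ γ) (hγ1 : γ < 1)
    (Q : (S → A) → S → A → ℝ)
    (hQ : ∀ (π : S → A) s a,
      Q π s a = ∑ s', P s a s' * (r s a s' + γ * Q π s' (π s')))
    (Pi : Finset (S → A)) (hne : Pi.Nonempty)
    (πGPI : S → A)
    (hGPI : ∀ s a, Pi.sup' hne (fun π => Q π s a) ≤ Pi.sup' hne (fun π => Q π s (πGPI s))) :
    ∀ π ∈ Pi, ∀ s a, Q π s a ≤ Q πGPI s a := by
  intro π hπ s a
  have hgap : ∀ p : S × A, Pi.sup' hne (fun π => Q π p.1 p.2) - Q πGPI p.1 p.2 ≤ 0 := by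
    refine nonpos_of_le_mul_upperBound hγ1 fun M hM p => ?_
    have := sup'_le_add_mul_of_sup'_le_add hP0 hP1 hγ0 hQ hGPI
      (fun s a => sub_le_iff_le_add'.mp (hM (s, a))) p.1 p.2
    linarith
  have := hgap (s, a)
  have := le_sup' (fun π => Q π s a) hπ
  linarith
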